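/- arXiv:1904.08850 — 6 statements merged into one kernel-verified Lean document; each statement's English description precedes it below -/
import Mathlib

section
/- Let ρ be a weak span L ←l− K ←i− I −r→ R in a category C with pushouts, and let ρ̂ = (L ←l− K −r'→ R') be its associated span, where ⟨R', i', r'⟩ is a pushout over ⟨i, r⟩. Then for any objects G, H: there exists a weak double-pushout transformation of G by ρ with result H if and only if there exists a double-pushout transformation of G by ρ̂ with result H. -/
open CategoryTheory

/-! The right-hand pushouts of the two transformations correspond by pasting with the pushout
`⟨R', i', r'⟩` over `⟨i, r⟩`: a pushout over `⟨r, k ∘ i⟩` factors through `R'` and leaves a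
pushout over `⟨r', k⟩`, and conversely pasting a pushout over `⟨r', k⟩` below the square `R'`
gives one over `⟨r, k ∘ i⟩`. The left-hand pushout is shared. -/

theorem CategoryTheory.IsPushout.exists_isPushout_comp_iff {C : Type*} [Category C]
    {I K R R' D H : C} {i : I ⟶ K} {r : I ⟶ R} {r' : K ⟶ R'} {i' : R ⟶ R'}
    (hassoc : IsPushout i r r' i') (k : K ⟶ D) (g : D ⟶ H) :
    (∃ n : R ⟶ H, IsPushout r (i ≫ k) n g) ↔ ∃ n' : R' ⟶ H, IsPushout r' k n' g :=
  ⟨fun ⟨_, h⟩ => ⟨_, h.of_top' hassoc.flip⟩,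
    fun ⟨n', h⟩ => ⟨i' ≫ n', hassoc.flip.paste_vert h⟩⟩

/-- Lemma 3 of the paper: a weak span `L ←l− K ←i− I −r→ R` transforms `G` into `H`
via a weak double pushout iff its associated span `L ←l− K −r'→ R'` (where
`⟨R', i', r'⟩` is a pushout over `⟨i, r⟩`) transforms `G` into `H` via a double
pushout. -/
theorem weakSpan_iff_assocSpan {C : Type*} [Category C]
    {L K I R R' G H : C}
    (l : K ⟶ L) (i : I ⟶ K) (r : I ⟶ R)
    (r' : K ⟶ R') (i' : R ⟶ R')
    (hassoc : IsPushout i r r' i') :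
    (∃ (D : C) (m : L ⟶ G) (k : K ⟶ D) (f : D ⟶ G) (g : D ⟶ H) (n : R ⟶ H),
        IsPushout l k m f ∧ IsPushout r (i ≫ k) n g) ↔
    (∃ (D : C) (m : L ⟶ G) (k : K ⟶ D) (f : D ⟶ G) (g : D ⟶ H) (n' : R' ⟶ H),
        IsPushout l k m f ∧ IsPushout r' k n' g) := by
  refine exists_congr fun D => exists_congr fun m => exists_congr fun k =>
    exists_congr fun f => exists_congr fun g => ?_
  simp only [exists_and_left, hassoc.exists_isPushout_comp_iff k g]
end

section
/- In the category FinAttr(V,U) of finitely attributed structures, let ⟨σ, id_A⟩ : ⟨F,A,f⟩ → ⟨G,A,g⟩ be a neutral morphism and ⟨τ, α⟩ : ⟨F,A,f⟩ → ⟨H,B,h⟩ an arbitrary morphism. If ⟨E, σ', τ'⟩ is a pushout over ⟨σ, τ⟩ in 𝓕, then ⟨⟨E,B,e⟩, ⟨τ',α⟩, ⟨σ',id_B⟩⟩ is a pushout over ⟨⟨σ,id_A⟩, ⟨τ,α⟩⟩ in FinAttr(V,U), where e(x) = (⋃_{v ∈ (Eτ')⁻¹(x)} Sα(g(v))) ∪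 (⋃_{w ∈ (Eσ')⁻¹(x)} h(w)) for all x ∈ EE. -/
open CategoryTheory

universe v₁ u₁ v₂ u₂ u

variable {𝓕 : Type u₁} [Category.{v₁} 𝓕] {𝓐 : Type u₂} [Category.{v₂} 𝓐]

/-- A finitely attributed structure `⟨F, A, f⟩`. -/
structure FinAttrObj (V : 𝓕 ⥤ FintypeCat.{u}) (U : 𝓐 ⥤ Type u) where
  F : 𝓕
  A : 𝓐
  attr : ↑(V.obj F) → {s : Set (U.obj A) // s.Finite}

/-- A morphism `⟨σ, α⟩` of finitely attributed structures. -/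
@[ext]
structure FinAttrHom {V : 𝓕 ⥤ FintypeCat.{u}} {U : 𝓐 ⥤ Type u}
    (X Y : FinAttrObj V U) where
  σ : X.F ⟶ Y.F
  α : X.A ⟶ Y.A
  cond : ∀ x : ↑(V.obj X.F),
    (U.map α) '' (X.attr x).1 ⊆ (Y.attr (V.map σ x)).1

/-- The category FinAttr(V,U) of finitely attributed structures. -/
instance FinAttr.category (V : 𝓕 ⥤ FintypeCat.{u}) (U : 𝓐 ⥤ Type u) :
    Category.{max v₁ v₂} (FinAttrObj V U) where
  Hom X Y := FinAttrHom X Y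
  id X := ⟨𝟙 X.F, 𝟙 X.A, by simp⟩
  comp {X Y Z} φ ψ :=
    ⟨φ.σ ≫ ψ.σ, φ.α ≫ ψ.α, by
      intro x
      rw [U.map_comp, V.map_comp]
      calc (U.map ψ.α ∘ U.map φ.α) '' (X.attr x).1
          = U.map ψ.α '' (U.map φ.α '' (X.attr x).1) := by
            rw [Set.image_comp]
        _ ⊆ U.map ψ.α '' (Y.attr (V.map φ.σ x)).1 :=
            Set.image_mono (φ.cond x)
        _ ⊆ (Z.attr (V.map ψ.σ (V.map φ.σ x))).1 := ψ.cond _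
        _ = (Z.attr ((V.map φ.σ ≫ V.map ψ.σ) x)).1 := rfl⟩
  id_comp φ := by apply FinAttrHom.ext <;> simp
  comp_id φ := by apply FinAttrHom.ext <;> simp
  assoc φ ψ χ := by apply FinAttrHom.ext <;> simp

/-!
Since `⟨σ, id⟩` is neutral, the attribute part of the square is the trivial pushout of `id_A` and
`α`, so the mediating morphism out of `⟨E, B, e⟩` is the map induced by the pushout in `𝓕`
together with the attribute component of the cocone's right leg. The attribute `e`
(`pushoutAttr`) is the least one on `E` making `⟨τ', α⟩` and `⟨σ', id⟩` morphisms, so this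
mediating map satisfies the attribute condition.
-/

open Limits

namespace FinAttrHom

variable {V : 𝓕 ⥤ FintypeCat.{u}} {U : 𝓐 ⥤ Type u}

@[simp]
lemma comp_α {X Y Z : FinAttrObj V U} (φ : X ⟶ Y) (ψ : Y ⟶ Z) : (φ ≫ ψ).α = φ.α ≫ ψ.α := rfl

end FinAttrHom

namespace FinAttrObj

variable {V : 𝓕 ⥤ FintypeCat.{u}} {U : 𝓐 ⥤ Type u} {G H E : 𝓕} {A B : 𝓐}
  (g : V.obj G → {s : Set (U.obj A) // s.Finite}) (h : V.obj H → {s : Set (U.obj B) // s.Finite})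
  (α : A ⟶ B) (τ' : G ⟶ E) (σ' : H ⟶ E)

def pushoutAttr (x : V.obj E) : {s : Set (U.obj B) // s.Finite} :=
  ⟨(⋃ v ∈ {v : V.obj G | V.map τ' v = x}, U.map α '' (g v).1) ∪
      ⋃ w ∈ {w : V.obj H | V.map σ' w = x}, (h w).1,
    ((Set.toFinite _).biUnion fun v _ => (g v).2.image _).union
      ((Set.toFinite _).biUnion fun w _ => (h w).2)⟩

lemma image_subset_pushoutAttr_map_left (v : V.obj G) :
    U.map α '' (g v).1 ⊆ (pushoutAttr g h α τ' σ' (V.map τ' v)).1 :=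
  fun _ hy => Or.inl (Set.mem_biUnion rfl hy)

lemma subset_pushoutAttr_map_right (w : V.obj H) :
    (h w).1 ⊆ (pushoutAttr g h α τ' σ' (V.map σ' w)).1 :=
  fun _ hy => Or.inr (Set.mem_biUnion rfl hy)

lemma image_pushoutAttr_subset {W : FinAttrObj V U} (d : E ⟶ W.F) (β : B ⟶ W.A)
    (hg : ∀ v, U.map (α ≫ β) '' (g v).1 ⊆ (W.attr (V.map (τ' ≫ d) v)).1)
    (hh : ∀ w, U.map β '' (h w).1 ⊆ (W.attr (V.map (σ' ≫ d) w)).1) (x : V.obj E) :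
    U.map β '' (pushoutAttr g h α τ' σ' x).1 ⊆ (W.attr (V.map d x)).1 := by
  rintro _ ⟨y, hy | hy, rfl⟩
  · obtain ⟨v, rfl, a, ha, rfl⟩ := Set.mem_iUnion₂.mp hy
    simpa using hg v ⟨a, ha, rfl⟩
  · obtain ⟨w, rfl, hyw⟩ := Set.mem_iUnion₂.mp hy
    simpa using hh w ⟨y, hyw, rfl⟩

def pushoutInl : mk G A g ⟶ mk E B (pushoutAttr g h α τ' σ') :=
  ⟨τ', α, image_subset_pushoutAttr_map_left g h α τ' σ'⟩

def pushoutInr : mk H B h ⟶ mk E B (pushoutAttr g h α τ' σ') :=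
  ⟨σ', 𝟙 B, fun w => by simpa using subset_pushoutAttr_map_right g h α τ' σ' w⟩

variable {g h α τ' σ'} {F : 𝓕} {f : V.obj F → {s : Set (U.obj A) // s.Finite}}
  {φ : mk F A f ⟶ mk G A g} {ψ : mk F A f ⟶ mk H B h}

theorem isPushout_pushoutInl_pushoutInr (hφ : φ.α = 𝟙 A) (hψ : ψ.α = α)
    (hpo : IsPushout φ.σ ψ.σ τ' σ') :
    IsPushout φ ψ (pushoutInl g h α τ' σ') (pushoutInr g h α τ' σ') := by
  have hα (s : PushoutCocone φ ψ) : α ≫ s.inr.α = s.inl.α := by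
    simpa [hφ, hψ] using (congrArg FinAttrHom.α s.condition).symm
  have comm : φ ≫ pushoutInl g h α τ' σ' = ψ ≫ pushoutInr g h α τ' σ' :=
    FinAttrHom.ext hpo.w (by simp [hφ, hψ, pushoutInl, pushoutInr])
  refine IsPushout.of_isColimit' ⟨comm⟩ (PushoutCocone.IsColimit.mk _
    (fun s => ⟨hpo.desc s.inl.σ s.inr.σ (congrArg FinAttrHom.σ s.condition), s.inr.α, ?_⟩)
    (fun s => FinAttrHom.ext (hpo.inl_desc _ _ _) ?_)
    (fun s => FinAttrHom.ext (hpo.inr_desc _ _ _) (Category.id_comp _))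
    (fun s m hm₁ hm₂ => FinAttrHom.ext ?_ ?_))
  · exact image_pushoutAttr_subset g h α τ' σ' _ _
      (by rw [hα s, hpo.inl_desc]; exact s.inl.cond) (by rw [hpo.inr_desc]; exact s.inr.cond)
  · exact hα s
  · exact hpo.hom_ext ((congrArg FinAttrHom.σ hm₁).trans (hpo.inl_desc _ _ _).symm)
      ((congrArg FinAttrHom.σ hm₂).trans (hpo.inr_desc _ _ _).symm)
  · simpa [pushoutInr] using congrArg FinAttrHom.α hm₂

end FinAttrObj

theorem finAttr_pushout_general (V : 𝓕 ⥤ FintypeCat.{u}) (U : 𝓐 ⥤ Type u)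
    {F G H E : 𝓕} {A B : 𝓐}
    (f : ↑(V.obj F) → {s : Set (U.obj A) // s.Finite})
    (g : ↑(V.obj G) → {s : Set (U.obj A) // s.Finite})
    (h : ↑(V.obj H) → {s : Set (U.obj B) // s.Finite})
    (σ : F ⟶ G) (τ : F ⟶ H) (α : A ⟶ B)
    (τ' : G ⟶ E) (σ' : H ⟶ E)
    (hpo : IsPushout σ τ τ' σ')
    (cσ : ∀ x, (U.map (𝟙 A)) '' (f x).1 ⊆ (g (V.map σ x)).1)
    (cτ : ∀ x, (U.map α) '' (f x).1 ⊆ (h (V.map τ x)).1) :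
    ∃ (c₁ : ∀ v : ↑(V.obj G), (U.map α) '' (g v).1 ⊆
        ((⋃ v' ∈ {v' : ↑(V.obj G) | V.map τ' v' = V.map τ' v},
            U.map α '' (g v').1) ∪
         (⋃ w ∈ {w : ↑(V.obj H) | V.map σ' w = V.map τ' v}, (h w).1)))
      (c₂ : ∀ w : ↑(V.obj H), (U.map (𝟙 B)) '' (h w).1 ⊆
        ((⋃ v' ∈ {v' : ↑(V.obj G) | V.map τ' v' = V.map σ' w},
            U.map α '' (g v').1) ∪
         (⋃ w' ∈ {w' : ↑(V.obj H) | V.map σ' w' = V.map σ' w}, (h w').1))),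
      IsPushout
        (show FinAttrObj.mk F A f ⟶ FinAttrObj.mk G A g from ⟨σ, 𝟙 A, cσ⟩)
        (show FinAttrObj.mk F A f ⟶ FinAttrObj.mk H B h from ⟨τ, α, cτ⟩)
        (show FinAttrObj.mk G A g ⟶ FinAttrObj.mk E B
            (fun x => ⟨(⋃ v' ∈ {v' : ↑(V.obj G) | V.map τ' v' = x},
                U.map α '' (g v').1) ∪
              (⋃ w ∈ {w : ↑(V.obj H) | V.map σ' w = x}, (h w).1),
              ((Set.toFinite _).biUnion fun v' _ => ((g v').2.image _)).union
                ((Set.toFinite _).biUnion fun w _ => (h w).2)⟩)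
          from ⟨τ', α, c₁⟩)
        (show FinAttrObj.mk H B h ⟶ FinAttrObj.mk E B
            (fun x => ⟨(⋃ v' ∈ {v' : ↑(V.obj G) | V.map τ' v' = x},
                U.map α '' (g v').1) ∪
              (⋃ w ∈ {w : ↑(V.obj H) | V.map σ' w = x}, (h w).1),
              ((Set.toFinite _).biUnion fun v' _ => ((g v').2.image _)).union
                ((Set.toFinite _).biUnion fun w _ => (h w).2)⟩)
          from ⟨σ', 𝟙 B, c₂⟩) :=
  ⟨(FinAttrObj.pushoutInl g h α τ' σ').cond, (FinAttrObj.pushoutInr g h α τ' σ').cond,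
    FinAttrObj.isPushout_pushoutInl_pushoutInr rfl rfl hpo⟩

/-- Lemma 4 of the paper: pushouts in FinAttr(V,U) along a neutral morphism.
If `⟨σ, id_A⟩ : ⟨F,A,f⟩ → ⟨G,A,g⟩` is neutral, `⟨τ, α⟩ : ⟨F,A,f⟩ → ⟨H,B,h⟩` is any
morphism, and `⟨E, σ', τ'⟩` is a pushout over `⟨σ, τ⟩` in `𝓕`, then
`⟨⟨E,B,e⟩, ⟨τ',α⟩, ⟨σ',id_B⟩⟩` is a pushout in FinAttr(V,U), where
`e(x) = (⋃_{v ∈ (Eτ')⁻¹(x)} Sα(g(v))) ∪ (⋃_{w ∈ (Eσ')⁻¹(x)} h(w))`. -/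
theorem finAttr_pushout (V : 𝓕 ⥤ FintypeCat.{u}) (U : 𝓐 ⥤ Type u)
    [Limits.PreservesColimitsOfShape Limits.WalkingSpan V]
    {F G H E : 𝓕} {A B : 𝓐}
    (f : ↑(V.obj F) → {s : Set (U.obj A) // s.Finite})
    (g : ↑(V.obj G) → {s : Set (U.obj A) // s.Finite})
    (h : ↑(V.obj H) → {s : Set (U.obj B) // s.Finite})
    (σ : F ⟶ G) (τ : F ⟶ H) (α : A ⟶ B)
    (τ' : G ⟶ E) (σ' : H ⟶ E)
    (hpo : IsPushout σ τ τ' σ')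
    (cσ : ∀ x, (U.map (𝟙 A)) '' (f x).1 ⊆ (g (V.map σ x)).1)
    (cτ : ∀ x, (U.map α) '' (f x).1 ⊆ (h (V.map τ x)).1) :
    ∃ (c₁ : ∀ v : ↑(V.obj G), (U.map α) '' (g v).1 ⊆
        ((⋃ v' ∈ {v' : ↑(V.obj G) | V.map τ' v' = V.map τ' v},
            U.map α '' (g v').1) ∪
         (⋃ w ∈ {w : ↑(V.obj H) | V.map σ' w = V.map τ' v}, (h w).1)))
      (c₂ : ∀ w : ↑(V.obj H), (U.map (𝟙 B)) '' (h w).1 ⊆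
        ((⋃ v' ∈ {v' : ↑(V.obj G) | V.map τ' v' = V.map σ' w},
            U.map α '' (g v').1) ∪
         (⋃ w' ∈ {w' : ↑(V.obj H) | V.map σ' w' = V.map σ' w}, (h w').1))),
      IsPushout
        (show FinAttrObj.mk F A f ⟶ FinAttrObj.mk G A g from ⟨σ, 𝟙 A, cσ⟩)
        (show FinAttrObj.mk F A f ⟶ FinAttrObj.mk H B h from ⟨τ, α, cτ⟩)
        (show FinAttrObj.mk G A g ⟶ FinAttrObj.mk E B
            (fun x => ⟨(⋃ v' ∈ {v' : ↑(V.obj G) | V.map τ' v' = x},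
                U.map α '' (g v').1) ∪
              (⋃ w ∈ {w : ↑(V.obj H) | V.map σ' w = x}, (h w).1),
              ((Set.toFinite _).biUnion fun v' _ => ((g v').2.image _)).union
                ((Set.toFinite _).biUnion fun w _ => (h w).2)⟩)
          from ⟨τ', α, c₁⟩)
        (show FinAttrObj.mk H B h ⟶ FinAttrObj.mk E B
            (fun x => ⟨(⋃ v' ∈ {v' : ↑(V.obj G) | V.map τ' v' = x},
                U.map α '' (g v').1) ∪
              (⋃ w ∈ {w : ↑(V.obj H) | V.map σ' w = x}, (h w).1),
              ((Set.toFinite _).biUnion fun v' _ => ((g v').2.image _)).union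
                ((Set.toFinite _).biUnion fun w _ => (h w).2)⟩)
          from ⟨σ', 𝟙 B, c₂⟩) :=
  finAttr_pushout_general V U f g h σ τ α τ' σ' hpo cσ cτ
end

section
/- In the category FinAttr(V,U), if g_a : D → H_a is a neutral morphism for all 1 ≤ a ≤ p (p ≥ 1), then there exists a colimit ⟨H, h₁,…,h_p⟩ over ⟨g₁,…,g_p⟩ (a wide pushout) such that all h_a are neutral morphisms. -/
open CategoryTheory

universe v₁ u₁ v₂ u₂ u

variable {𝓕 : Type u₁} [Category.{v₁} 𝓕] {𝓐 : Type u₂} [Category.{v₂} 𝓐]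

/-!
Finite wide pushouts in `𝓕` are built from binary pushouts, one leg at a time. Over a family
of neutral morphisms, the wide pushout in FinAttr(V,U) is the wide pushout `W` in `𝓕` with the
attribute object `A` unchanged, an element `y` of `V W` carrying the union of the attributes of
all its preimages under the legs. A cocone out of the neutral `g` has a single attribute
component, since the `g a` have identity attribute components, and the mediating morphism of `𝓕`
respects attributes because every attribute of `y` comes from some preimage.
-/

namespace CategoryTheory

section WidePushout

variable {C : Type*} [Category C] {ι : Type*} {D : C} {H : ι → C}

/-- Unlike Mathlib's `WidePushout`, the apex `D` has no leg of its own, so this is the colimit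
only for nonempty `ι`. -/
def IsWidePushout (g : ∀ a, D ⟶ H a) {W : C} (h : ∀ a, H a ⟶ W) : Prop :=
  (∀ a b, g a ≫ h a = g b ≫ h b) ∧
    ∀ (Z : C) (z : ∀ a, H a ⟶ Z), (∀ a b, g a ≫ z a = g b ≫ z b) →
      ∃! u : W ⟶ Z, ∀ a, h a ≫ u = z a

theorem isWidePushout_of_unique [Unique ι] (g : ∀ a, D ⟶ H a) :
    IsWidePushout g fun a => eqToHom (congrArg H (Unique.eq_default a)) := by
  refine ⟨fun a b => by rw [Subsingleton.elim a b], fun Z z _ => ⟨z default, fun a => ?_, ?_⟩⟩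
  · rw [Unique.eq_default a]
    simp
  · intro u hu
    simpa using hu default

theorem IsWidePushout.lastCases_of_isPushout {n : ℕ} {H : Fin (n + 2) → C}
    {g : ∀ a, D ⟶ H a} {W : C} {h : ∀ a : Fin (n + 1), H a.castSucc ⟶ W}
    (hW : IsWidePushout (fun a : Fin (n + 1) => g a.castSucc) h) {P : C} {inl : W ⟶ P}
    {inr : H (Fin.last _) ⟶ P}
    (hP : IsPushout (g (Fin.castSucc 0) ≫ h 0) (g (Fin.last _)) inl inr) :
    IsWidePushout g (Fin.lastCases inr fun a => h a ≫ inl) := by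
  set c := g (Fin.castSucc 0) ≫ h 0
  have hdiag :
      ∀ a, g a ≫ (Fin.lastCases inr fun a => h a ≫ inl : ∀ a, H a ⟶ P) a = c ≫ inl := by
    refine Fin.forall_fin_succ'.2 ⟨fun a => ?_, ?_⟩
    · simp only [Fin.lastCases_castSucc]
      rw [← Category.assoc, hW.1 a 0]
    · simp only [Fin.lastCases_last, hP.w]
  refine ⟨fun a b => by rw [hdiag a, hdiag b], fun Z z hz => ?_⟩
  obtain ⟨u, hu, hu_unique⟩ := hW.2 Z (fun a => z a.castSucc) fun a b => hz _ _
  have hcu : c ≫ u = g (Fin.last _) ≫ z (Fin.last _) := by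
    rw [Category.assoc, hu 0, hz]
  refine ⟨hP.desc u (z (Fin.last _)) hcu, ?_, fun v hv => hP.hom_ext ?_ ?_⟩
  · refine Fin.forall_fin_succ'.2 ⟨fun a => ?_, ?_⟩
    · simp only [Fin.lastCases_castSucc, Category.assoc, hP.inl_desc, hu a]
    · simp only [Fin.lastCases_last, hP.inr_desc]
  · rw [hP.inl_desc]
    refine hu_unique _ fun a => ?_
    simpa using hv a.castSucc
  · rw [hP.inr_desc]
    simpa using hv (Fin.last _)

theorem exists_isWidePushout_fin [Limits.HasPushouts C] (n : ℕ) {H : Fin (n + 1) → C}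
    (g : ∀ a, D ⟶ H a) : ∃ (W : C) (h : ∀ a, H a ⟶ W), IsWidePushout g h := by
  induction n with
  | zero => exact ⟨_, _, isWidePushout_of_unique (ι := Fin 1) g⟩
  | succ n ih =>
    obtain ⟨W, h, hW⟩ := ih fun a => g a.castSucc
    exact ⟨_, _, IsWidePushout.lastCases_of_isPushout hW (IsPushout.of_hasPushout _ _)⟩

end WidePushout

end CategoryTheory

namespace FinAttr

variable {V : 𝓕 ⥤ FintypeCat.{u}} {U : 𝓐 ⥤ Type u}

@[simp]
theorem comp_α {X Y Z : FinAttrObj V U} (φ : X ⟶ Y) (ψ : Y ⟶ Z) : (φ ≫ ψ).α = φ.α ≫ ψ.α :=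
  rfl

theorem hom_ext {X Y : FinAttrObj V U} {φ ψ : X ⟶ Y} (hσ : φ.σ = ψ.σ) (hα : φ.α = ψ.α) :
    φ = ψ :=
  FinAttrHom.ext hσ hα

section Pushforward

variable {ι : Type*} [Finite ι] {A : 𝓐} {HF : ι → 𝓕}
  (hattr : ∀ a, ↑(V.obj (HF a)) → {s : Set (U.obj A) // s.Finite}) {W : 𝓕} (h : ∀ a, HF a ⟶ W)

def pushforwardAttr (y : ↑(V.obj W)) : {s : Set (U.obj A) // s.Finite} :=
  ⟨⋃ (a) (x) (_ : V.map (h a) x = y), (hattr a x).1,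
    Set.finite_iUnion fun a => Set.finite_iUnion fun x => Set.finite_iUnion fun _ => (hattr a x).2⟩

def pushforwardHom (a : ι) :
    FinAttrObj.mk (HF a) A (hattr a) ⟶ FinAttrObj.mk W A (pushforwardAttr hattr h) :=
  ⟨h a, 𝟙 A, fun x => by
    simp only [Functor.map_id_apply, Set.image_id']
    exact Set.subset_iUnion_of_subset a <| Set.subset_iUnion_of_subset x <|
      Set.subset_iUnion_of_subset rfl subset_rfl⟩

@[simp]
theorem pushforwardHom_α (a : ι) : (pushforwardHom hattr h a).α = 𝟙 A :=
  rfl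

theorem image_pushforwardAttr_subset {Z : FinAttrObj V U} {u : W ⟶ Z.F} {α : A ⟶ Z.A}
    (hsub : ∀ a x, U.map α '' (hattr a x).1 ⊆ (Z.attr (V.map (h a ≫ u) x)).1)
    (y : ↑(V.obj W)) : U.map α '' (pushforwardAttr hattr h y).1 ⊆ (Z.attr (V.map u y)).1 := by
  rintro _ ⟨s, hs, rfl⟩
  simp only [pushforwardAttr, Set.mem_iUnion] at hs
  obtain ⟨a, x, rfl, hsx⟩ := hs
  simpa using hsub a x ⟨s, hsx, rfl⟩

theorem isWidePushout_pushforwardHom [Nonempty ι] {DF : 𝓕}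
    {dattr : ↑(V.obj DF) → {s : Set (U.obj A) // s.Finite}}
    (g : ∀ a, FinAttrObj.mk DF A dattr ⟶ FinAttrObj.mk (HF a) A (hattr a))
    (hneutral : ∀ a, (g a).α = 𝟙 A) (hW : IsWidePushout (fun a => (g a).σ) h) :
    IsWidePushout g (pushforwardHom hattr h) := by
  refine ⟨fun a b => hom_ext (hW.1 a b) (by simp [hneutral]), fun Z z hz => ?_⟩
  obtain ⟨a₀⟩ := ‹Nonempty ι›
  have hα : ∀ a, (z a).α = (z a₀).α := fun a => by
    simpa [hneutral] using congrArg FinAttrHom.α (hz a a₀)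
  obtain ⟨u, hu, hu_unique⟩ :=
    hW.2 Z.F (fun a => (z a).σ) fun a b => congrArg FinAttrHom.σ (hz a b)
  have hsub : ∀ a x, U.map (z a₀).α '' (hattr a x).1 ⊆ (Z.attr (V.map (h a ≫ u) x)).1 := by
    intro a x
    rw [hu a, ← hα a]
    exact (z a).cond x
  refine ⟨⟨u, (z a₀).α, image_pushforwardAttr_subset hattr h hsub⟩,
    fun a => hom_ext (hu a) (by simp [hα a]), fun v hv => hom_ext ?_ ?_⟩
  · exact hu_unique v.σ fun a => congrArg FinAttrHom.σ (hv a)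
  · simpa using congrArg FinAttrHom.α (hv a₀)

end Pushforward

end FinAttr

theorem finAttr_wide_pushout_general (V : 𝓕 ⥤ FintypeCat.{u}) (U : 𝓐 ⥤ Type u)
    [Limits.HasPushouts 𝓕]
    {p : ℕ} (hp : 1 ≤ p)
    {DF : 𝓕} {A : 𝓐} (dattr : ↑(V.obj DF) → {s : Set (U.obj A) // s.Finite})
    {HF : Fin p → 𝓕}
    (hattr : ∀ a, ↑(V.obj (HF a)) → {s : Set (U.obj A) // s.Finite})
    (g : ∀ a : Fin p,
      FinAttrObj.mk DF A dattr ⟶ FinAttrObj.mk (HF a) A (hattr a))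
    (hneutral : ∀ a, (g a).α = 𝟙 A) :
    ∃ (WF : 𝓕) (wattr : ↑(V.obj WF) → {s : Set (U.obj A) // s.Finite})
      (h : ∀ a : Fin p,
        FinAttrObj.mk (HF a) A (hattr a) ⟶ FinAttrObj.mk WF A wattr),
      (∀ a, (h a).α = 𝟙 A) ∧
      (∀ a b, g a ≫ h a = g b ≫ h b) ∧
      (∀ (Z : FinAttrObj V U)
        (z : ∀ a : Fin p, FinAttrObj.mk (HF a) A (hattr a) ⟶ Z),
        (∀ a b, g a ≫ z a = g b ≫ z b) →
        ∃! u : FinAttrObj.mk WF A wattr ⟶ Z, ∀ a, h a ≫ u = z a) := by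
  obtain ⟨n, rfl⟩ : ∃ n, p = n + 1 := ⟨p - 1, by omega⟩
  obtain ⟨WF, h, hW⟩ := exists_isWidePushout_fin n fun a => (g a).σ
  exact ⟨WF, _, _, fun _ => rfl, FinAttr.isWidePushout_pushforwardHom hattr h g hneutral hW⟩

/-- Corollary 1 of the paper: in FinAttr(V,U) (with `𝓕` having pushouts and `V`
preserving them), if `g_a : D → H_a` is neutral for all `1 ≤ a ≤ p` (`p ≥ 1`), then
there exists a colimit (wide pushout) `⟨H, h₁, …, h_p⟩` over `⟨g₁, …, g_p⟩` such
that all the `h_a` are neutral. -/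
theorem finAttr_wide_pushout (V : 𝓕 ⥤ FintypeCat.{u}) (U : 𝓐 ⥤ Type u)
    [Limits.HasPushouts 𝓕] [Limits.PreservesColimitsOfShape Limits.WalkingSpan V]
    {p : ℕ} (hp : 1 ≤ p)
    {DF : 𝓕} {A : 𝓐} (dattr : ↑(V.obj DF) → {s : Set (U.obj A) // s.Finite})
    {HF : Fin p → 𝓕}
    (hattr : ∀ a, ↑(V.obj (HF a)) → {s : Set (U.obj A) // s.Finite})
    (g : ∀ a : Fin p,
      FinAttrObj.mk DF A dattr ⟶ FinAttrObj.mk (HF a) A (hattr a))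
    (hneutral : ∀ a, (g a).α = 𝟙 A) :
    ∃ (WF : 𝓕) (wattr : ↑(V.obj WF) → {s : Set (U.obj A) // s.Finite})
      (h : ∀ a : Fin p,
        FinAttrObj.mk (HF a) A (hattr a) ⟶ FinAttrObj.mk WF A wattr),
      (∀ a, (h a).α = 𝟙 A) ∧
      (∀ a b, g a ≫ h a = g b ≫ h b) ∧
      (∀ (Z : FinAttrObj V U)
        (z : ∀ a : Fin p, FinAttrObj.mk (HF a) A (hattr a) ⟶ Z),
        (∀ a b, g a ≫ z a = g b ≫ z b) →
        ∃! u : FinAttrObj.mk WF A wattr ⟶ Z, ∀ a, h a ≫ u = z a) :=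
  finAttr_wide_pushout_general V U hp dattr hattr g hneutral
end

section
/- In a weak adhesive HLR category ⟨C, M⟩ with coproducts compatible with M, let ρ₁, ρ₂ be M-weak spans, and let γ₁, γ₂ be parallel independent direct transformations of G by ρ₁, ρ₂ respectively. If there is a parallel coherent transformation G ⟹_{γ₁,γ₂} H', then there is a direct transformation of G by the coproduct weak span ρ₁+ρ₂, namely γ₁+γ₂, with G ⟹_{γ₁+γ₂} H'. -/
/-!
The coproduct match is `[m₁, m₂] : L₁ + L₂ → G` and the coproduct context is the pullback `D'`
of `f₁, f₂`. Parallel independence gives lifts `p₁ : K₁ → D'`, `p₂ : K₂ → D'` of `(k₁, l₁ ≫ j₁)`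
and `(l₂ ≫ j₂, k₂)`, with `d₁ = i₁ ≫ p₁` and `d₂ = i₂ ≫ p₂`. The pushout `G` of `l₁, k₁` splits
as the square `(l₁, p₁, j₁, e₂)` followed by the pullback square `(e₁, e₂, f₁, f₂)`; since
`f₂ ∈ M`, pushout-pullback decomposition makes the first square a pushout. Pasting it with the
pushout square of `γ₂` gives the left pushout of `ρ₁ + ρ₂`. The right pushout is obtained the same
way from `H'₁` and the pasting of `H'₂` with `H'`.
-/

open CategoryTheory CategoryTheory.Limits

namespace CategoryTheory

variable {C : Type*} [Category C]

def MorphismProperty.HasPushoutPullbackDecomposition (M : MorphismProperty C) : Prop :=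
  ∀ {A B E C' D F : C} (u : A ⟶ B) (t : B ⟶ E)
    (v : A ⟶ C') (v₂ : B ⟶ D) (v₃ : E ⟶ F) (b : C' ⟶ D) (w : D ⟶ F),
    u ≫ v₂ = v ≫ b → t ≫ v₃ = v₂ ≫ w →
    IsPushout (u ≫ t) v v₃ (b ≫ w) → IsPullback t v₂ v₃ w →
    M w → (M u ∨ M v) →
    IsPushout u v v₂ b ∧ IsPullback u v v₂ b ∧
      IsPushout t v₂ v₃ w ∧ IsPullback t v₂ v₃ w

lemma IsPushout.coprodMap_of_paste [HasBinaryCoproducts C]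
    {K₁ L₁ K₂ L₂ X P₁ P₂ : C}
    {l₁ : K₁ ⟶ L₁} {p₁ : K₁ ⟶ X} {a₁ : L₁ ⟶ P₁} {c₁ : X ⟶ P₁}
    {l₂ : K₂ ⟶ L₂} {p₂ : K₂ ⟶ X} {a₂ : L₂ ⟶ P₂} {c₂ : P₁ ⟶ P₂}
    (h₁ : IsPushout l₁ p₁ a₁ c₁) (h₂ : IsPushout l₂ (p₂ ≫ c₁) a₂ c₂) :
    IsPushout (coprod.map l₁ l₂) (coprod.desc p₁ p₂)
      (coprod.desc (a₁ ≫ c₂) a₂) (c₁ ≫ c₂) := by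
  have w : coprod.map l₁ l₂ ≫ coprod.desc (a₁ ≫ c₂) a₂ = coprod.desc p₁ p₂ ≫ c₁ ≫ c₂ := by
    ext
    · simpa [coprod.inl_desc] using h₁.w =≫ c₂
    · simpa [coprod.inr_desc] using h₂.w
  have cond₁ (s : PushoutCocone (coprod.map l₁ l₂) (coprod.desc p₁ p₂)) :
      l₁ ≫ coprod.inl ≫ s.inl = p₁ ≫ s.inr := by
    simpa [coprod.inl_desc] using coprod.inl ≫= s.condition
  have cond₂ (s : PushoutCocone (coprod.map l₁ l₂) (coprod.desc p₁ p₂)) :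
      l₂ ≫ coprod.inr ≫ s.inl = (p₂ ≫ c₁) ≫ h₁.desc _ _ (cond₁ s) := by
    simpa [coprod.inr_desc] using coprod.inr ≫= s.condition
  refine IsPushout.of_isColimit (c := PushoutCocone.mk _ _ w)
    (PushoutCocone.IsColimit.mk w
      (fun s => h₂.desc (coprod.inr ≫ s.inl) (h₁.desc _ _ (cond₁ s)) (cond₂ s))
      (fun s => by ext <;> simp [coprod.inl_desc, coprod.inr_desc]) (fun s => by simp) ?_)
  intro s m hml hmr
  apply h₂.hom_ext
  · simpa [coprod.inr_desc] using coprod.inr ≫= hml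
  · apply h₁.hom_ext
    · simpa [coprod.inl_desc] using coprod.inl ≫= hml
    · simpa using hmr

lemma MorphismProperty.HasPushoutPullbackDecomposition.isPushout_of_factor_through_isPullback
    {M : MorphismProperty C} (hM : M.HasPushoutPullbackDecomposition)
    {K L G D D' P : C} {l : K ⟶ L} {k : K ⟶ D} {m : L ⟶ G} {f : D ⟶ G}
    {e₁ : P ⟶ D} {e₂ : P ⟶ D'} {f' : D' ⟶ G} {p : K ⟶ P} {j : L ⟶ D'}
    (hl : M l) (hf' : M f') (hpo : IsPushout l k m f) (hpb : IsPullback e₁ e₂ f f')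
    (hpe₁ : p ≫ e₁ = k) (hpe₂ : p ≫ e₂ = l ≫ j) (hj : j ≫ f' = m) :
    IsPushout l p j e₂ := by
  have hbig : IsPushout (p ≫ e₁) l f (j ≫ f') := by
    rw [hpe₁, hj]
    exact hpo.flip
  exact (hM p e₁ l e₂ f j f' hpe₂ hpb.w hbig hpb hf' (Or.inr hl)).1.flip

end CategoryTheory

theorem parallel_coherent_of_parallel_independent_general
    {C : Type*} [Category C] [HasBinaryCoproducts C]
    (M : MorphismProperty C)
    -- M is closed under pushouts
    (hMpo : ∀ {W X Y Z : C} (f : W ⟶ X) (g : W ⟶ Y) (h : X ⟶ Z) (i : Y ⟶ Z),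
      IsPushout f g h i → M f → M i)
    -- the M pushout-pullback decomposition lemma
    (hMdecomp : ∀ {A B E C' D F : C} (u : A ⟶ B) (t : B ⟶ E)
      (v : A ⟶ C') (v₂ : B ⟶ D) (v₃ : E ⟶ F) (b : C' ⟶ D) (w : D ⟶ F),
      u ≫ v₂ = v ≫ b → t ≫ v₃ = v₂ ≫ w →
      IsPushout (u ≫ t) v v₃ (b ≫ w) → IsPullback t v₂ v₃ w →
      M w → (M u ∨ M v) →
      IsPushout u v v₂ b ∧ IsPullback u v v₂ b ∧
        IsPushout t v₂ v₃ w ∧ IsPullback t v₂ v₃ w)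
    {G H' : C}
    -- the two M-weak spans
    {L₁ K₁ I₁ R₁ L₂ K₂ I₂ R₂ : C}
    (l₁ : K₁ ⟶ L₁) (i₁ : I₁ ⟶ K₁) (r₁ : I₁ ⟶ R₁)
    (l₂ : K₂ ⟶ L₂) (i₂ : I₂ ⟶ K₂) (r₂ : I₂ ⟶ R₂)
    (hl₁ : M l₁)
    (hl₂ : M l₂)
    -- the two direct transformations γ₁, γ₂
    {D₁ D₂ : C}
    (m₁ : L₁ ⟶ G) (k₁ : K₁ ⟶ D₁) (f₁ : D₁ ⟶ G)
    (m₂ : L₂ ⟶ G) (k₂ : K₂ ⟶ D₂) (f₂ : D₂ ⟶ G)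
    (hγ₁l : IsPushout l₁ k₁ m₁ f₁)
    (hγ₂l : IsPushout l₂ k₂ m₂ f₂)
    -- parallel independence
    (j₁ : L₁ ⟶ D₂) (j₂ : L₂ ⟶ D₁)
    (hj₁ : j₁ ≫ f₂ = m₁) (hj₂ : j₂ ≫ f₁ = m₂)
    -- the parallel coherent transformation G ⟹_{γ₁,γ₂} H'
    {D' H'₁ H'₂ : C}
    (e₁ : D' ⟶ D₁) (e₂ : D' ⟶ D₂)
    (hlim : IsPullback e₁ e₂ f₁ f₂)
    (d₁ : I₁ ⟶ D') (d₂ : I₂ ⟶ D')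
    (hd₁ : d₁ ≫ e₁ = i₁ ≫ k₁) (hd₁' : d₁ ≫ e₂ = i₁ ≫ l₁ ≫ j₁)
    (hd₂ : d₂ ≫ e₂ = i₂ ≫ k₂) (hd₂' : d₂ ≫ e₁ = i₂ ≫ l₂ ≫ j₂)
    (g'₁ : D' ⟶ H'₁) (n'₁ : R₁ ⟶ H'₁) (g'₂ : D' ⟶ H'₂) (n'₂ : R₂ ⟶ H'₂)
    (hH'₁ : IsPushout r₁ d₁ n'₁ g'₁) (hH'₂ : IsPushout r₂ d₂ n'₂ g'₂)
    (h₁ : H'₁ ⟶ H') (h₂ : H'₂ ⟶ H')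
    (hcolim : IsPushout g'₁ g'₂ h₁ h₂) :
    -- a direct transformation of G by ρ₁ + ρ₂ with result H' (namely γ₁ + γ₂)
    ∃ (D : C) (k : K₁ ⨿ K₂ ⟶ D) (f : D ⟶ G) (g : D ⟶ H') (n : R₁ ⨿ R₂ ⟶ H'),
      IsPushout (coprod.map l₁ l₂) k (coprod.desc m₁ m₂) f ∧
      IsPushout (coprod.map r₁ r₂) (coprod.map i₁ i₂ ≫ k) n g := by
  let p₁ : K₁ ⟶ D' := hlim.lift k₁ (l₁ ≫ j₁) (by rw [Category.assoc, hj₁, hγ₁l.w])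
  let p₂ : K₂ ⟶ D' := hlim.lift (l₂ ≫ j₂) k₂ (by rw [Category.assoc, hj₂, hγ₂l.w])
  have hd₁p : d₁ = i₁ ≫ p₁ := hlim.hom_ext (by simp [p₁, hd₁]) (by simp [p₁, hd₁'])
  have hd₂p : d₂ = i₂ ≫ p₂ := hlim.hom_ext (by simp [p₂, hd₂']) (by simp [p₂, hd₂])
  have hsplit : IsPushout l₁ p₁ j₁ e₂ :=
    MorphismProperty.HasPushoutPullbackDecomposition.isPushout_of_factor_through_isPullback
      hMdecomp hl₁ (hMpo l₂ k₂ m₂ f₂ hγ₂l hl₂) hγ₁l hlim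
      (hlim.lift_fst _ _ _) (hlim.lift_snd _ _ _) hj₁
  have hleft := hsplit.coprodMap_of_paste (p₂ := p₂) (by simpa [p₂] using hγ₂l)
  have hright := hH'₁.coprodMap_of_paste (hH'₂.flip.paste_horiz hcolim).flip
  refine ⟨D', coprod.desc p₁ p₂, e₂ ≫ f₂, g'₁ ≫ h₁,
    coprod.desc (n'₁ ≫ h₁) (n'₂ ≫ h₂), by rwa [hj₁] at hleft, ?_⟩
  have hmap : coprod.map i₁ i₂ ≫ coprod.desc p₁ p₂ = coprod.desc d₁ d₂ := by
    ext <;> simp [hd₁p, hd₂p]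
  rwa [hmap]

/-- Theorem 1 of the paper: in a weak adhesive HLR category `⟨C, M⟩` (whose assumed
properties — closure of `M` under pushouts and pullbacks, pushouts along `M` being
pullbacks, and the `M` pushout-pullback decomposition lemma — are listed as
hypotheses) with binary coproducts compatible with `M`, if `γ₁, γ₂` are parallel
independent direct transformations of `G` by `M`-weak spans `ρ₁, ρ₂` and there is a
parallel coherent transformation `G ⟹_{γ₁,γ₂} H'`, then there is a direct
transformation of `G` by the coproduct weak span `ρ₁ + ρ₂` with result `H'`. -/
theorem parallel_coherent_of_parallel_independent
    {C : Type*} [Category C] [HasBinaryCoproducts C]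
    (M : MorphismProperty C)
    -- M is closed under pushouts
    (hMpo : ∀ {W X Y Z : C} (f : W ⟶ X) (g : W ⟶ Y) (h : X ⟶ Z) (i : Y ⟶ Z),
      IsPushout f g h i → M f → M i)
    -- M is closed under pullbacks
    (hMpb : ∀ {P X Y Z : C} (p : P ⟶ X) (q : P ⟶ Y) (f : X ⟶ Z) (g : Y ⟶ Z),
      IsPullback p q f g → M f → M q)
    -- pushouts along M-morphisms are pullbacks
    (hMpopb : ∀ {W X Y Z : C} (f : W ⟶ X) (g : W ⟶ Y) (h : X ⟶ Z) (i : Y ⟶ Z),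
      IsPushout f g h i → M f → IsPullback f g h i)
    -- the M pushout-pullback decomposition lemma
    (hMdecomp : ∀ {A B E C' D F : C} (u : A ⟶ B) (t : B ⟶ E)
      (v : A ⟶ C') (v₂ : B ⟶ D) (v₃ : E ⟶ F) (b : C' ⟶ D) (w : D ⟶ F),
      u ≫ v₂ = v ≫ b → t ≫ v₃ = v₂ ≫ w →
      IsPushout (u ≫ t) v v₃ (b ≫ w) → IsPullback t v₂ v₃ w →
      M w → (M u ∨ M v) →
      IsPushout u v v₂ b ∧ IsPullback u v v₂ b ∧
        IsPushout t v₂ v₃ w ∧ IsPullback t v₂ v₃ w)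
    -- coproducts are compatible with M
    (hMcoprod : ∀ {X₁ Y₁ X₂ Y₂ : C} (f : X₁ ⟶ Y₁) (g : X₂ ⟶ Y₂),
      M f → M g → M (coprod.map f g))
    {G H' : C}
    -- the two M-weak spans
    {L₁ K₁ I₁ R₁ L₂ K₂ I₂ R₂ : C}
    (l₁ : K₁ ⟶ L₁) (i₁ : I₁ ⟶ K₁) (r₁ : I₁ ⟶ R₁)
    (l₂ : K₂ ⟶ L₂) (i₂ : I₂ ⟶ K₂) (r₂ : I₂ ⟶ R₂)
    (hl₁ : M l₁) (hi₁ : M i₁) (hr₁ : M r₁)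
    (hl₂ : M l₂) (hi₂ : M i₂) (hr₂ : M r₂)
    -- the two direct transformations γ₁, γ₂
    {D₁ H₁ D₂ H₂ : C}
    (m₁ : L₁ ⟶ G) (k₁ : K₁ ⟶ D₁) (f₁ : D₁ ⟶ G) (g₁ : D₁ ⟶ H₁) (n₁ : R₁ ⟶ H₁)
    (m₂ : L₂ ⟶ G) (k₂ : K₂ ⟶ D₂) (f₂ : D₂ ⟶ G) (g₂ : D₂ ⟶ H₂) (n₂ : R₂ ⟶ H₂)
    (hγ₁l : IsPushout l₁ k₁ m₁ f₁) (hγ₁r : IsPushout r₁ (i₁ ≫ k₁) n₁ g₁)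
    (hγ₂l : IsPushout l₂ k₂ m₂ f₂) (hγ₂r : IsPushout r₂ (i₂ ≫ k₂) n₂ g₂)
    -- parallel independence
    (j₁ : L₁ ⟶ D₂) (j₂ : L₂ ⟶ D₁)
    (hj₁ : j₁ ≫ f₂ = m₁) (hj₂ : j₂ ≫ f₁ = m₂)
    -- the parallel coherent transformation G ⟹_{γ₁,γ₂} H'
    {D' H'₁ H'₂ : C}
    (e₁ : D' ⟶ D₁) (e₂ : D' ⟶ D₂)
    (hlim : IsPullback e₁ e₂ f₁ f₂)
    (d₁ : I₁ ⟶ D') (d₂ : I₂ ⟶ D')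
    (hd₁ : d₁ ≫ e₁ = i₁ ≫ k₁) (hd₁' : d₁ ≫ e₂ = i₁ ≫ l₁ ≫ j₁)
    (hd₂ : d₂ ≫ e₂ = i₂ ≫ k₂) (hd₂' : d₂ ≫ e₁ = i₂ ≫ l₂ ≫ j₂)
    (g'₁ : D' ⟶ H'₁) (n'₁ : R₁ ⟶ H'₁) (g'₂ : D' ⟶ H'₂) (n'₂ : R₂ ⟶ H'₂)
    (hH'₁ : IsPushout r₁ d₁ n'₁ g'₁) (hH'₂ : IsPushout r₂ d₂ n'₂ g'₂)
    (h₁ : H'₁ ⟶ H') (h₂ : H'₂ ⟶ H')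
    (hcolim : IsPushout g'₁ g'₂ h₁ h₂) :
    -- a direct transformation of G by ρ₁ + ρ₂ with result H' (namely γ₁ + γ₂)
    ∃ (D : C) (k : K₁ ⨿ K₂ ⟶ D) (f : D ⟶ G) (g : D ⟶ H') (n : R₁ ⨿ R₂ ⟶ H'),
      IsPushout (coprod.map l₁ l₂) k (coprod.desc m₁ m₂) f ∧
      IsPushout (coprod.map r₁ r₂) (coprod.map i₁ i₂ ≫ k) n g :=
  parallel_coherent_of_parallel_independent_general M hMpo hMdecomp l₁ i₁ r₁ l₂ i₂ r₂ hl₁ hl₂ m₁ k₁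
    f₁ m₂ k₂ f₂ hγ₁l hγ₂l j₁ j₂ hj₁ hj₂ e₁ e₂ hlim d₁ d₂ hd₁ hd₁' hd₂ hd₂' g'₁ n'₁ g'₂ n'₂ hH'₁ hH'₂
    h₁ h₂ hcolim
end

section
/- If two direct transformations γ₁ ∈ Trans(G, ρ₁) and γ₂ ∈ Trans(G, ρ₂) of an object G by weak spans ρ₁, ρ₂ are parallel independent, then they are parallel coherent. -/
open CategoryTheory

theorem CategoryTheory.CommSq.comp_fac_of_fac {C : Type*} [Category C] {K L D D' G I : C}
    {l : K ⟶ L} {k : K ⟶ D} {m : L ⟶ G} {f : D ⟶ G} (sq : CommSq l k m f)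
    {j : L ⟶ D'} {f' : D' ⟶ G} (hj : j ≫ f' = m) (i : I ⟶ K) :
    (i ≫ l ≫ j) ≫ f' = (i ≫ k) ≫ f := by
  simp only [Category.assoc, hj, sq.w]

theorem parallel_independent_implies_parallel_coherent_general {C : Type*} [Category C]
    {G : C}
    {L₁ K₁ I₁ D₁ : C} {L₂ K₂ I₂ D₂ : C}
    (l₁ : K₁ ⟶ L₁) (i₁ : I₁ ⟶ K₁)
    (m₁ : L₁ ⟶ G) (k₁ : K₁ ⟶ D₁) (f₁ : D₁ ⟶ G)
    (l₂ : K₂ ⟶ L₂) (i₂ : I₂ ⟶ K₂)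
    (m₂ : L₂ ⟶ G) (k₂ : K₂ ⟶ D₂) (f₂ : D₂ ⟶ G)
    (hγ₁left : IsPushout l₁ k₁ m₁ f₁)
    (hγ₂left : IsPushout l₂ k₂ m₂ f₂)
    (hindep : ∃ (j₁ : L₁ ⟶ D₂) (j₂ : L₂ ⟶ D₁), j₁ ≫ f₂ = m₁ ∧ j₂ ≫ f₁ = m₂) :
    ∃ (j'₁ : I₁ ⟶ D₂) (j'₂ : I₂ ⟶ D₁),
      j'₁ ≫ f₂ = (i₁ ≫ k₁) ≫ f₁ ∧ j'₂ ≫ f₁ = (i₂ ≫ k₂) ≫ f₂ := by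
  obtain ⟨j₁, j₂, hj₁, hj₂⟩ := hindep
  exact ⟨i₁ ≫ l₁ ≫ j₁, i₂ ≫ l₂ ≫ j₂,
    hγ₁left.toCommSq.comp_fac_of_fac hj₁ i₁, hγ₂left.toCommSq.comp_fac_of_fac hj₂ i₂⟩

/-- If two direct transformations `γ₁ ∈ Trans(G, ρ₁)` and `γ₂ ∈ Trans(G, ρ₂)` of `G`
by weak spans `ρ₁, ρ₂` are parallel independent (there exist `j₁ : L₁ ⟶ D₂` and
`j₂ : L₂ ⟶ D₁` with `f₂ ∘ j₁ = m₁` and `f₁ ∘ j₂ = m₂`), then they are parallel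
coherent (there exist `j'₁ : I₁ ⟶ D₂` and `j'₂ : I₂ ⟶ D₁` with
`f₂ ∘ j'₁ = f₁ ∘ k₁ ∘ i₁` and `f₁ ∘ j'₂ = f₂ ∘ k₂ ∘ i₂`). -/
theorem parallel_independent_implies_parallel_coherent {C : Type*} [Category C]
    {G : C}
    {L₁ K₁ I₁ R₁ D₁ H₁ : C} {L₂ K₂ I₂ R₂ D₂ H₂ : C}
    (l₁ : K₁ ⟶ L₁) (i₁ : I₁ ⟶ K₁) (r₁ : I₁ ⟶ R₁)
    (m₁ : L₁ ⟶ G) (k₁ : K₁ ⟶ D₁) (f₁ : D₁ ⟶ G) (g₁ : D₁ ⟶ H₁) (n₁ : R₁ ⟶ H₁)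
    (l₂ : K₂ ⟶ L₂) (i₂ : I₂ ⟶ K₂) (r₂ : I₂ ⟶ R₂)
    (m₂ : L₂ ⟶ G) (k₂ : K₂ ⟶ D₂) (f₂ : D₂ ⟶ G) (g₂ : D₂ ⟶ H₂) (n₂ : R₂ ⟶ H₂)
    (hγ₁left : IsPushout l₁ k₁ m₁ f₁) (hγ₁right : IsPushout r₁ (i₁ ≫ k₁) n₁ g₁)
    (hγ₂left : IsPushout l₂ k₂ m₂ f₂) (hγ₂right : IsPushout r₂ (i₂ ≫ k₂) n₂ g₂)
    (hindep : ∃ (j₁ : L₁ ⟶ D₂) (j₂ : L₂ ⟶ D₁), j₁ ≫ f₂ = m₁ ∧ j₂ ≫ f₁ = m₂) :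
    ∃ (j'₁ : I₁ ⟶ D₂) (j'₂ : I₂ ⟶ D₁),
      j'₁ ≫ f₂ = (i₁ ≫ k₁) ≫ f₁ ∧ j'₂ ≫ f₁ = (i₂ ≫ k₂) ≫ f₂ :=
  parallel_independent_implies_parallel_coherent_general l₁ i₁ m₁ k₁ f₁ l₂ i₂ m₂ k₂ f₂ hγ₁left
    hγ₂left hindep
end

section
/- In a weak adhesive HLR category ⟨C,M⟩, given a commutative diagram where the outer rectangle (pasting of a left square and right square) is a pushout, the right square is a pullback, the bottom-right morphism w is in M, and at least one of the two morphisms u (top-left) or v (left vertical) is in M, then both the left and right squares are pushouts and pullbacks. -/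
/-! View the left square as the top face of a cube over the outer pushout: its back faces are
the trivial pullbacks along identities, its front faces are the right square and the trivial
pullback of `w` along `b`, and its vertical morphisms `𝟙`, `t`, `𝟙`, `w` all lie in `M`
(`t` as a pullback of `w`, identities as pullbacks of `w` along composites with `w`). The weak
van Kampen property of the outer pushout, taken along `u ≫ t` or along `v`, makes the left
square a pushout; pushout cancellation then gives the right square. A pushout along an
`M`-morphism is a pullback by van Kampen for the cube whose top face is the degenerate
pushout along identities. -/

open CategoryTheory

namespace WeakAdhesiveHLR

variable {C : Type*} [Category C]

/-- The (weak) van Kampen property of a pushout square `(f, g, h, i)` relative to a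
class `M` of monomorphisms: for every commutative cube over the square whose back
faces are pullbacks and such that either all four vertical morphisms are in `M`, or
the morphisms `f'`, `h'`, `i'` of the top square are in `M`, the top square is a
pushout iff the two front faces are pullbacks. -/
def WeakVanKampen (M : MorphismProperty C) {W X Y Z : C}
    (f : W ⟶ X) (g : W ⟶ Y) (h : X ⟶ Z) (i : Y ⟶ Z) : Prop :=
  ∀ {W' X' Y' Z' : C} (f' : W' ⟶ X') (g' : W' ⟶ Y') (h' : X' ⟶ Z') (i' : Y' ⟶ Z')
    (wW : W' ⟶ W) (wX : X' ⟶ X) (wY : Y' ⟶ Y) (wZ : Z' ⟶ Z),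
    f' ≫ wX = wW ≫ f → g' ≫ wY = wW ≫ g →
    h' ≫ wZ = wX ≫ h → i' ≫ wZ = wY ≫ i →
    IsPullback f' wW wX f → IsPullback g' wW wY g →
    ((M wW ∧ M wX ∧ M wY ∧ M wZ) ∨ (M f' ∧ M h' ∧ M i')) →
    (IsPushout f' g' h' i' ↔ (IsPullback h' wX wZ h ∧ IsPullback i' wY wZ i))

lemma isPullback_id_comp_of_mono {P X Z : C} (p : P ⟶ X) (f : X ⟶ Z) [Mono f] :
    IsPullback p (𝟙 P) f (p ≫ f) := by
  simpa using (IsPullback.id_vert p).paste_horiz (IsKernelPair.id_of_mono f)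

lemma id_mem_of_mem (M : MorphismProperty C)
    (hMmono : ∀ {X Y : C} (f : X ⟶ Y), M f → Mono f)
    (hMpb : ∀ {P X Y Z : C} (p : P ⟶ X) (q : P ⟶ Y) (f : X ⟶ Z) (g : Y ⟶ Z),
      IsPullback p q f g → M f → M q)
    {P X Z : C} (p : P ⟶ X) {f : X ⟶ Z} (hf : M f) : M (𝟙 P) :=
  have := hMmono f hf
  hMpb p (𝟙 P) f (p ≫ f) (isPullback_id_comp_of_mono p f) hf

lemma isPullback_of_isPushout_of_mem (M : MorphismProperty C)
    (hMmono : ∀ {X Y : C} (f : X ⟶ Y), M f → Mono f)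
    (hMpo : ∀ {W X Y Z : C} (f : W ⟶ X) (g : W ⟶ Y) (h : X ⟶ Z) (i : Y ⟶ Z),
      IsPushout f g h i → M f → M i)
    (hMpb : ∀ {P X Y Z : C} (p : P ⟶ X) (q : P ⟶ Y) (f : X ⟶ Z) (g : Y ⟶ Z),
      IsPullback p q f g → M f → M q)
    {W X Y Z : C} {f : W ⟶ X} {g : W ⟶ Y} {h : X ⟶ Z} {i : Y ⟶ Z}
    (hpo : IsPushout f g h i) (hf : M f) (hVK : WeakVanKampen M f g h i) :
    IsPullback f g h i := by
  have hi : M i := hMpo f g h i hpo hf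
  have := hMmono f hf
  have := hMmono i hi
  have hcube := hVK (𝟙 W) g g (𝟙 Y) (𝟙 W) f (𝟙 Y) i
    (by simp) (by simp) hpo.w.symm (by simp)
    (IsKernelPair.id_of_mono f) (IsPullback.id_vert g)
    (Or.inl ⟨id_mem_of_mem M hMmono hMpb (𝟙 W) hf, hf,
      id_mem_of_mem M hMmono hMpb (𝟙 Y) hi, hi⟩)
  exact (hcube.mp (IsPushout.of_horiz_isIso ⟨by simp⟩)).1.flip

section Decomposition

variable {A B E C' D F : C} {u : A ⟶ B} {t : B ⟶ E} {v : A ⟶ C'} {v₂ : B ⟶ D}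
  {v₃ : E ⟶ F} {b : C' ⟶ D} {w : D ⟶ F}

lemma isPushout_left_of_weakVanKampen (M : MorphismProperty C)
    (hMmono : ∀ {X Y : C} (f : X ⟶ Y), M f → Mono f)
    (hMpb : ∀ {P X Y Z : C} (p : P ⟶ X) (q : P ⟶ Y) (f : X ⟶ Z) (g : Y ⟶ Z),
      IsPullback p q f g → M f → M q)
    (hVK : WeakVanKampen M (u ≫ t) v v₃ (b ≫ w))
    (hrightpb : IsPullback t v₂ v₃ w) (hw : M w) :
    IsPushout u v v₂ b := by
  have ht : M t := hMpb v₂ t w v₃ hrightpb.flip hw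
  have := hMmono t ht
  have := hMmono w hw
  exact (hVK u v v₂ b (𝟙 A) t (𝟙 C') w (by simp) (by simp) hrightpb.w.symm (by simp)
    (isPullback_id_comp_of_mono u t) (IsPullback.id_vert v)
    (Or.inl ⟨id_mem_of_mem M hMmono hMpb (u ≫ v₂) hw, ht,
      id_mem_of_mem M hMmono hMpb b hw, hw⟩)).mpr
    ⟨hrightpb.flip, isPullback_id_comp_of_mono b w⟩

lemma isPushout_left_of_weakVanKampen_flip (M : MorphismProperty C)
    (hMmono : ∀ {X Y : C} (f : X ⟶ Y), M f → Mono f)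
    (hMpb : ∀ {P X Y Z : C} (p : P ⟶ X) (q : P ⟶ Y) (f : X ⟶ Z) (g : Y ⟶ Z),
      IsPullback p q f g → M f → M q)
    (hVK : WeakVanKampen M v (u ≫ t) (b ≫ w) v₃)
    (hrightpb : IsPullback t v₂ v₃ w) (hw : M w) :
    IsPushout u v v₂ b := by
  have ht : M t := hMpb v₂ t w v₃ hrightpb.flip hw
  have := hMmono t ht
  have := hMmono w hw
  exact (hVK v u b v₂ (𝟙 A) (𝟙 C') t w (by simp) (by simp) (by simp) hrightpb.w.symm
    (IsPullback.id_vert v) (isPullback_id_comp_of_mono u t)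
    (Or.inl ⟨id_mem_of_mem M hMmono hMpb (u ≫ v₂) hw,
      id_mem_of_mem M hMmono hMpb b hw, ht, hw⟩)).mpr
    ⟨isPullback_id_comp_of_mono b w, hrightpb.flip⟩ |>.flip

end Decomposition

theorem m_po_pb_decomposition_general (M : MorphismProperty C)
    (hMmono : ∀ {X Y : C} (f : X ⟶ Y), M f → Mono f)
    (hMcomp : ∀ {X Y Z : C} (f : X ⟶ Y) (g : Y ⟶ Z), M f → M g → M (f ≫ g))
    (hMpo : ∀ {W X Y Z : C} (f : W ⟶ X) (g : W ⟶ Y) (h : X ⟶ Z) (i : Y ⟶ Z),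
      IsPushout f g h i → M f → M i)
    (hMpb : ∀ {P X Y Z : C} (p : P ⟶ X) (q : P ⟶ Y) (f : X ⟶ Z) (g : Y ⟶ Z),
      IsPullback p q f g → M f → M q)
    (hVK : ∀ {W X Y Z : C} (f : W ⟶ X) (g : W ⟶ Y) (h : X ⟶ Z) (i : Y ⟶ Z),
      IsPushout f g h i → M f → WeakVanKampen M f g h i)
    {A B E C' D F : C}
    (u : A ⟶ B) (t : B ⟶ E)
    (v : A ⟶ C') (v₂ : B ⟶ D) (v₃ : E ⟶ F)
    (b : C' ⟶ D) (w : D ⟶ F)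
    (houter : IsPushout (u ≫ t) v v₃ (b ≫ w))
    (hrightpb : IsPullback t v₂ v₃ w)
    (hw : M w) (huv : M u ∨ M v) :
    IsPushout u v v₂ b ∧ IsPullback u v v₂ b ∧
      IsPushout t v₂ v₃ w ∧ IsPullback t v₂ v₃ w := by
  have hleftpo : IsPushout u v v₂ b := by
    rcases huv with hu | hv
    · have hut : M (u ≫ t) := hMcomp u t hu (hMpb v₂ t w v₃ hrightpb.flip hw)
      exact isPushout_left_of_weakVanKampen M hMmono hMpb
        (hVK _ _ _ _ houter hut) hrightpb hw
    · exact isPushout_left_of_weakVanKampen_flip M hMmono hMpb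
        (hVK _ _ _ _ houter.flip hv) hrightpb hw
  have hleftpb : IsPullback u v v₂ b := by
    rcases huv with hu | hv
    · exact isPullback_of_isPushout_of_mem M hMmono hMpo hMpb hleftpo hu
        (hVK _ _ _ _ hleftpo hu)
    · exact (isPullback_of_isPushout_of_mem M hMmono hMpo hMpb hleftpo.flip hv
        (hVK _ _ _ _ hleftpo.flip hv)).flip
  exact ⟨hleftpo, hleftpb, houter.of_left hrightpb.w hleftpo, hrightpb⟩

/-- The M pushout-pullback decomposition lemma in a weak adhesive HLR category
`⟨C, M⟩`: if the outer rectangle of two adjacent commutative squares is a pushout,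
the right square is a pullback, `w ∈ M` and (`u ∈ M` or `v ∈ M`), then both squares
are pushouts and pullbacks. The weak adhesive HLR structure is given by: `M` is a
class of monomorphisms closed under composition and under pushouts and pullbacks,
and pushouts along `M`-morphisms are weak van Kampen squares. -/
theorem m_po_pb_decomposition (M : MorphismProperty C)
    (hMmono : ∀ {X Y : C} (f : X ⟶ Y), M f → Mono f)
    (hMcomp : ∀ {X Y Z : C} (f : X ⟶ Y) (g : Y ⟶ Z), M f → M g → M (f ≫ g))
    (hMpo : ∀ {W X Y Z : C} (f : W ⟶ X) (g : W ⟶ Y) (h : X ⟶ Z) (i : Y ⟶ Z),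
      IsPushout f g h i → M f → M i)
    (hMpb : ∀ {P X Y Z : C} (p : P ⟶ X) (q : P ⟶ Y) (f : X ⟶ Z) (g : Y ⟶ Z),
      IsPullback p q f g → M f → M q)
    (hVK : ∀ {W X Y Z : C} (f : W ⟶ X) (g : W ⟶ Y) (h : X ⟶ Z) (i : Y ⟶ Z),
      IsPushout f g h i → M f → WeakVanKampen M f g h i)
    {A B E C' D F : C}
    (u : A ⟶ B) (t : B ⟶ E)
    (v : A ⟶ C') (v₂ : B ⟶ D) (v₃ : E ⟶ F)
    (b : C' ⟶ D) (w : D ⟶ F)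
    (hleftcomm : u ≫ v₂ = v ≫ b)
    (houter : IsPushout (u ≫ t) v v₃ (b ≫ w))
    (hrightpb : IsPullback t v₂ v₃ w)
    (hw : M w) (huv : M u ∨ M v) :
    IsPushout u v v₂ b ∧ IsPullback u v v₂ b ∧
      IsPushout t v₂ v₃ w ∧ IsPullback t v₂ v₃ w :=
  m_po_pb_decomposition_general M hMmono hMcomp hMpo hMpb hVK u t v v₂ v₃ b w houter hrightpb hw huv

end WeakAdhesiveHLR
end
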